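/- Let V be a finite-dimensional complex vector space with a quadratic form Q, let C = CliffordAlgebra Q, let Δ be a nonzero finite-dimensional complex normed vector space, let ρ : C ≃ End_ℂ(Δ) be an isomorphism of ℂ-algebras, and let Γ ⊆ Δ be a discrete additive subgroup. If c, c' ∈ C both preserve Γ (ρ(c)(Γ) ⊆ Γ and ρ(c')(Γ) ⊆ Γ) and induce the same additive endomorphism of Δ/Γ — i.e. ρ(c)(x) - ρ(c')(x) ∈ Γ for all x ∈ Δ — then c = c'. In other words, Clifford multiplication ρ̂ : ℂ_q(V)_ℤ → End(Δ/Γ) is an injective ring homomorphism. -/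

import Mathlib

/-! A discrete subgroup `Γ` of a topological module over a connected ring contains no
line through a nonzero vector: `t ↦ t • v` would be a continuous map from the connected scalars
into the discrete space `Γ`, hence constant. Since `ρ(c) - ρ(c')` is linear, its image is a
subspace, and it lies in `Γ`; so `ρ(c) = ρ(c')`, and `c = c'` because `ρ` is injective. -/

theorem AddSubgroup.eq_zero_of_forall_smul_mem {𝕜 M : Type*} [Ring 𝕜] [TopologicalSpace 𝕜]
    [PreconnectedSpace 𝕜] [AddCommGroup M] [Module 𝕜 M] [TopologicalSpace M]
    [ContinuousSMul 𝕜 M] (Γ : AddSubgroup M) [DiscreteTopology Γ] {v : M}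
    (hv : ∀ t : 𝕜, t • v ∈ Γ) : v = 0 := by
  let line : 𝕜 → Γ := fun t => ⟨t • v, hv t⟩
  have hline : Continuous line := (continuous_id.smul continuous_const).subtype_mk _
  have hconst : line 1 = line 0 := PreconnectedSpace.constant ‹_› hline
  simpa [line] using congrArg Subtype.val hconst

theorem LinearMap.eq_zero_of_forall_apply_mem_discrete {𝕜 M N : Type*} [Ring 𝕜]
    [TopologicalSpace 𝕜] [PreconnectedSpace 𝕜] [AddCommGroup M] [Module 𝕜 M] [AddCommGroup N]
    [Module 𝕜 N] [TopologicalSpace N] [ContinuousSMul 𝕜 N] (Γ : AddSubgroup N)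
    [DiscreteTopology Γ] (f : M →ₗ[𝕜] N) (hf : ∀ x, f x ∈ Γ) : f = 0 :=
  LinearMap.ext fun x => Γ.eq_zero_of_forall_smul_mem fun (t : 𝕜) => by
    simpa only [map_smul] using hf (t • x)

theorem clifford_multiplication_injective_general {V : Type*} [AddCommGroup V] [Module ℂ V]
    (Q : QuadraticForm ℂ V)
    {Δ : Type*} [NormedAddCommGroup Δ] [NormedSpace ℂ Δ]
    (rho : CliffordAlgebra Q ≃ₐ[ℂ] Module.End ℂ Δ)
    (Γ : AddSubgroup Δ) [DiscreteTopology Γ]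
    (c c' : CliffordAlgebra Q)
    (h : ∀ x : Δ, rho c x - rho c' x ∈ Γ) : c = c' :=
  rho.injective <| sub_eq_zero.mp <| (rho c - rho c').eq_zero_of_forall_apply_mem_discrete Γ h

/-- With `C = CliffordAlgebra Q` for a quadratic form `Q` on a
finite-dimensional complex vector space `V`, `Δ` a nonzero finite-dimensional
complex normed vector space, `ρ : C ≃ₐ[ℂ] End_ℂ(Δ)` an algebra isomorphism, and
`Γ ≤ Δ` a discrete additive subgroup: if `c, c' ∈ C` both preserve `Γ` and induce
the same additive endomorphism of `Δ ⧸ Γ` (i.e. `ρ(c)x - ρ(c')x ∈ Γ` for all `x`),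
then `c = c'`.  Clifford multiplication `ρ̂ : ℂ_q(V)_ℤ → End(Δ ⧸ Γ)` is injective. -/
theorem clifford_multiplication_injective {V : Type*} [AddCommGroup V] [Module ℂ V]
    [FiniteDimensional ℂ V] (Q : QuadraticForm ℂ V)
    {Δ : Type*} [NormedAddCommGroup Δ] [NormedSpace ℂ Δ]
    [FiniteDimensional ℂ Δ] [Nontrivial Δ]
    (rho : CliffordAlgebra Q ≃ₐ[ℂ] Module.End ℂ Δ)
    (Γ : AddSubgroup Δ) [DiscreteTopology Γ]
    (c c' : CliffordAlgebra Q)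
    (hc : ∀ γ ∈ Γ, rho c γ ∈ Γ) (hc' : ∀ γ ∈ Γ, rho c' γ ∈ Γ)
    (h : ∀ x : Δ, rho c x - rho c' x ∈ Γ) : c = c' :=
  clifford_multiplication_injective_general Q rho Γ c c' h
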